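/- arXiv:2510.03942 — 3 statements merged into one kernel-verified Lean document; each statement's English description precedes it below -/
import Mathlib

section
/- Soundness of the multiplayer partial-information game: if the coalition P_∃ of players controlling existentially quantified trace variables has a joint observation-respecting strategy under which every resulting play of G_{K,φ} is even (the minimal infinitely occurring color is even), then K ⊨ φ. -/
/-!
Fix a winning strategy profile `σ` of the coalition and read the quantifier prefix from left
to right, keeping a profile that agrees with `σ` on the coalition and whose play traces out
the traces chosen so far as the round-by-round paths of the first copies. A universally
quantified trace is realized by letting its player follow the trace's directions; an
existentially quantified one is the path its copy takes in the current play. Changing the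
strategy of player `m` never affects copies `j < m`: the players `q ≤ j` observe only copies
`≤ j` and respect their observations, so they move alike in both plays. Once all traces are
fixed the play is even, and since the DPA reads one letter per round, its automaton component
is the run on the zipped traces with each state held for a round; so that run is accepting
and `ψ` holds.
-/

/-- Syntax of LTL formulas over atomic propositions `α` (with a primitive
`true` constant). -/
inductive LTL (α : Type) where
  | tt : LTL α
  | atom : α → LTL α
  | conj : LTL α → LTL α → LTL α
  | neg : LTL α → LTL α
  | next : LTL α → LTL α
  | untl : LTL α → LTL α → LTL α

/-- Satisfaction of an LTL formula on a trace `t : ℕ → Set α` at position `i`. -/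
def LTL.sat {α : Type} (t : ℕ → Set α) : ℕ → LTL α → Prop
  | _, .tt => True
  | i, .atom a => a ∈ t i
  | i, .conj φ ψ => LTL.sat t i φ ∧ LTL.sat t i ψ
  | i, .neg φ => ¬ LTL.sat t i φ
  | i, .next φ => LTL.sat t (i + 1) φ
  | i, .untl φ ψ =>
      ∃ k, i ≤ k ∧ LTL.sat t k ψ ∧ ∀ j, i ≤ j → j < k → LTL.sat t j φ

/-- Paths of a Kripke structure. -/
def IsKPath {St D : Type} (init : St) (κ : St → D → St) (τ : ℕ → St) : Prop :=
  τ 0 = init ∧ ∀ i, ∃ d : D, τ (i + 1) = κ (τ i) d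

/-- The trace set of a Kripke structure. -/
def KTraces {St D α : Type} (init : St) (κ : St → D → St) (ℓ : St → Set α) :
    Set (ℕ → Set α) :=
  {t | ∃ τ : ℕ → St, IsKPath init κ τ ∧ ∀ i, t i = ℓ (τ i)}

/-- Combine a list of `n` traces (for trace variables `π₁, …, π_n`, in order)
into one trace over variable-indexed atomic propositions `α × Fin n`. -/
def zipTraces {α : Type} (n : ℕ) (ts : List (ℕ → Set α)) : ℕ → Set (α × Fin n) :=
  fun k => {x | x.1 ∈ ts.getD x.2.val (fun _ => (∅ : Set α)) k}

/-- Semantics of a HyperLTL quantifier prefix (`true` = `∃`, `false` = `∀`)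
over a trace set, applied to a body predicate on the quantified traces. -/
def hyperSat {α : Type} (Tr : Set (ℕ → Set α)) :
    List Bool → (List (ℕ → Set α) → Prop) → Prop
  | [], body => body []
  | true :: qs, body => ∃ t ∈ Tr, hyperSat Tr qs fun ts => body (t :: ts)
  | false :: qs, body => ∀ t ∈ Tr, hyperSat Tr qs fun ts => body (t :: ts)

/-- A vertex of the verification game `G_{K,φ}`: states of the `n` system
copies, a state of the deterministic parity automaton `A_ψ`, and the player
whose turn it is. -/
structure GVertex (St Q : Type) (n : ℕ) where
  st : Fin n → St
  aut : Q
  turn : Fin n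

/-- The letter over the indexed alphabet read from the current copy states. -/
def letterOf {St α : Type} {n : ℕ} (ℓ : St → Set α) (s : Fin n → St) :
    Set (α × Fin n) :=
  {x | x.1 ∈ ℓ (s x.2)}

/-- One move of the game: the player to move updates its own copy along the
chosen direction and the turn passes round-robin to the next player; when
player `0` (the first player) moves, a round has just concluded and the DPA
state is additionally updated by reading the indexed labels of the current
copy states. -/
def gStep {St D α Q : Type} {n : ℕ} [NeZero n] (κ : St → D → St)
    (ℓ : St → Set α) (δ : Q → Set (α × Fin n) → Q)
    (v : GVertex St Q n) (d : D) : GVertex St Q n :=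
  if v.turn = 0 then
    ⟨Function.update v.st v.turn (κ (v.st v.turn) d),
      δ v.aut (letterOf ℓ v.st), v.turn + 1⟩
  else
    ⟨Function.update v.st v.turn (κ (v.st v.turn) d), v.aut, v.turn + 1⟩

/-- The initial vertex: all copies in the initial state, the DPA in its
initial state, player `0` to move. -/
def gInit {St Q : Type} {n : ℕ} [NeZero n] (init : St) (q0 : Q) :
    GVertex St Q n :=
  ⟨fun _ => init, q0, 0⟩

/-- `ρ` is the infinite play arising from the global strategy `σ` (one
strategy per player, mapping the history of vertices to a direction). -/
def IsPlay {St D α Q : Type} {n : ℕ} [NeZero n] (init : St) (κ : St → D → St)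
    (ℓ : St → Set α) (δ : Q → Set (α × Fin n) → Q) (q0 : Q)
    (σ : Fin n → List (GVertex St Q n) → D) (ρ : ℕ → GVertex St Q n) : Prop :=
  ρ 0 = gInit init q0 ∧
  ∀ i, ρ (i + 1) =
    gStep κ ℓ δ (ρ i) (σ (ρ i).turn ((List.range (i + 1)).map ρ))

/-- Player `p`'s observation on vertices: the player to move coincides and the
states of all copies `j ≤ p` coincide. -/
def gObs {St Q : Type} {n : ℕ} (p : Fin n) (v v' : GVertex St Q n) : Prop :=
  v.turn = v'.turn ∧ ∀ j : Fin n, j ≤ p → v.st j = v'.st j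

/-- Positionwise lifting of player `p`'s observation to finite plays. -/
def listObs {St Q : Type} {n : ℕ} (p : Fin n)
    (ρ₁ ρ₂ : List (GVertex St Q n)) : Prop :=
  ρ₁.length = ρ₂.length ∧
  ∀ i (h₁ : i < ρ₁.length) (h₂ : i < ρ₂.length),
    gObs p (ρ₁.get ⟨i, h₁⟩) (ρ₂.get ⟨i, h₂⟩)

/-- A strategy respects player `p`'s observations if it chooses the same
direction on indistinguishable histories. -/
def ObsStrategy {St D Q : Type} {n : ℕ} (p : Fin n)
    (σp : List (GVertex St Q n) → D) : Prop :=
  ∀ ρ₁ ρ₂, listObs p ρ₁ ρ₂ → σp ρ₁ = σp ρ₂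

/-- The parity condition on a state sequence `r`: the minimal color occurring
infinitely often is even. -/
def MinInfEven {Q : Type} (c : Q → ℕ) (r : ℕ → Q) : Prop :=
  ∃ m, Even m ∧ {i | c (r i) = m}.Infinite ∧
    ∀ m', {i | c (r i) = m'}.Infinite → m ≤ m'

/-- A play of the game is even iff the traversed DPA states satisfy the
parity condition (vertex colors are the colors of their DPA component). -/
def EvenPlay {St Q : Type} {n : ℕ} (c : Q → ℕ) (ρ : ℕ → GVertex St Q n) :
    Prop :=
  MinInfEven c fun i => (ρ i).aut

/-- The coalition `coal` wins `G_{K,φ}`: its members have observation-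
respecting strategies such that, no matter which strategies the remaining
players use, the resulting play is even. -/
def Wins {St D α Q : Type} {n : ℕ} [NeZero n] (init : St) (κ : St → D → St)
    (ℓ : St → Set α) (δ : Q → Set (α × Fin n) → Q) (q0 : Q) (c : Q → ℕ)
    (coal : Set (Fin n)) : Prop :=
  ∃ σ : Fin n → List (GVertex St Q n) → D,
    (∀ p ∈ coal, ObsStrategy p (σ p)) ∧
    ∀ σ' : Fin n → List (GVertex St Q n) → D,
      (∀ p ∈ coal, σ' p = σ p) →
      ∀ ρ, IsPlay init κ ℓ δ q0 σ' ρ → EvenPlay c ρ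

/-- The run of the DPA `(δ, q0)` on an infinite word `u`. -/
def dpaRun {α Q : Type} (δ : Q → α → Q) (q0 : Q) (u : ℕ → α) : ℕ → Q
  | 0 => q0
  | i + 1 => δ (dpaRun δ q0 u i) (u i)

theorem hyperSat_of_invariant {β : Type} {Tr : Set (ℕ → Set β)} (qs : List Bool)
    (Inv : List (ℕ → Set β) → Prop) (body : List (ℕ → Set β) → Prop)
    (hforall : ∀ pre (h : pre.length < qs.length), qs[pre.length] = false → Inv pre →
      ∀ t ∈ Tr, Inv (pre ++ [t]))
    (hexists : ∀ pre (h : pre.length < qs.length), qs[pre.length] = true → Inv pre →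
      ∃ t ∈ Tr, Inv (pre ++ [t]))
    (hend : ∀ pre, pre.length = qs.length → Inv pre → body pre) (hnil : Inv []) :
    hyperSat Tr qs body := by
  induction qs generalizing Inv body with
  | nil => exact hend [] rfl hnil
  | cons q qs ih =>
    have shift : ∀ t, Inv [t] → hyperSat Tr qs fun ts => body (t :: ts) := fun t ht =>
      ih (fun pre => Inv (t :: pre)) (fun ts => body (t :: ts))
        (fun pre h hq => hforall (t :: pre) (by simpa using h) hq)
        (fun pre h hq => hexists (t :: pre) (by simpa using h) hq)
        (fun pre h => hend (t :: pre) (by simpa using h)) ht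
    cases q with
    | false => exact fun t ht => shift t (hforall [] (by simp) rfl hnil t ht)
    | true =>
      obtain ⟨t, ht, hinv⟩ := hexists [] (by simp) rfl hnil
      exact ⟨t, ht, shift t hinv⟩

theorem Set.infinite_preimage_iff_of_surjective {β γ : Type*} {f : β → γ}
    (hsurj : Function.Surjective f) (hfib : ∀ b, (f ⁻¹' {b}).Finite) {s : Set γ} :
    (f ⁻¹' s).Infinite ↔ s.Infinite :=
  ⟨fun h hs => h (hs.preimage' fun b _ => hfib b),
    fun h => h.preimage fun b _ => hsurj b⟩

theorem minInfEven_comp_iff {Q : Type} {c : Q → ℕ} {u : ℕ → Q} {f : ℕ → ℕ}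
    (hsurj : Function.Surjective f) (hfib : ∀ b, (f ⁻¹' {b}).Finite) :
    MinInfEven c (u ∘ f) ↔ MinInfEven c u := by
  have key : ∀ m, {i | c ((u ∘ f) i) = m}.Infinite ↔ {k | c (u k) = m}.Infinite :=
    fun m => Set.infinite_preimage_iff_of_surjective hsurj hfib (s := {k | c (u k) = m})
  simp only [MinInfEven, key]

section Game

open Fin.NatCast

variable {St D α Q : Type} {n : ℕ} [NeZero n]

section Step

variable {κ : St → D → St} {ℓ : St → Set α} {δ : Q → Set (α × Fin n) → Q}

theorem gStep_st (v : GVertex St Q n) (d : D) :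
    (gStep κ ℓ δ v d).st = Function.update v.st v.turn (κ (v.st v.turn) d) := by
  unfold gStep; split <;> rfl

theorem gStep_turn (v : GVertex St Q n) (d : D) : (gStep κ ℓ δ v d).turn = v.turn + 1 := by
  unfold gStep; split <;> rfl

theorem gStep_aut (v : GVertex St Q n) (d : D) :
    (gStep κ ℓ δ v d).aut = if v.turn = 0 then δ v.aut (letterOf ℓ v.st) else v.aut := by
  unfold gStep; split <;> simp_all

omit [NeZero n] in
theorem gObs.mono {p q : Fin n} (h : q ≤ p) {v v' : GVertex St Q n} (hv : gObs p v v') :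
    gObs q v v' :=
  ⟨hv.1, fun j hj => hv.2 j (hj.trans h)⟩

theorem gObs.gStep {p : Fin n} {v v' : GVertex St Q n} {d d' : D} (hv : gObs p v v')
    (hd : v.turn ≤ p → d = d') : gObs p (gStep κ ℓ δ v d) (gStep κ ℓ δ v' d') := by
  refine ⟨by rw [gStep_turn, gStep_turn, hv.1], fun j hj => ?_⟩
  rw [gStep_st, gStep_st, ← hv.1]
  by_cases hjt : j = v.turn
  · subst hjt
    rw [Function.update_self, Function.update_self, hv.2 _ hj, hd hj]
  · rw [Function.update_of_ne hjt, Function.update_of_ne hjt, hv.2 j hj]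

end Step

variable (init : St) (κ : St → D → St) (ℓ : St → Set α) (δ : Q → Set (α × Fin n) → Q) (q0 : Q)

def playAndHistory (σ : Fin n → List (GVertex St Q n) → D) :
    ℕ → GVertex St Q n × List (GVertex St Q n)
  | 0 => (gInit init q0, [gInit init q0])
  | i + 1 =>
    let w := gStep κ ℓ δ (playAndHistory σ i).1
      (σ (playAndHistory σ i).1.turn (playAndHistory σ i).2)
    (w, (playAndHistory σ i).2 ++ [w])

def play (σ : Fin n → List (GVertex St Q n) → D) (i : ℕ) : GVertex St Q n :=
  (playAndHistory init κ ℓ δ q0 σ i).1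

def copyPath (σ : Fin n → List (GVertex St Q n) → D) (p : Fin n) (k : ℕ) : St :=
  (play init κ ℓ δ q0 σ (k * n)).st p

variable {init κ ℓ δ q0} (σ : Fin n → List (GVertex St Q n) → D)

theorem playAndHistory_snd (i : ℕ) :
    (playAndHistory init κ ℓ δ q0 σ i).2 = (List.range (i + 1)).map (play init κ ℓ δ q0 σ) := by
  induction i with
  | zero => rfl
  | succ i ih =>
    rw [List.range_succ, List.map_append, ← ih]
    rfl

theorem play_zero : play init κ ℓ δ q0 σ 0 = gInit init q0 := rfl

theorem play_succ (i : ℕ) :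
    play init κ ℓ δ q0 σ (i + 1) = gStep κ ℓ δ (play init κ ℓ δ q0 σ i)
      (σ (play init κ ℓ δ q0 σ i).turn ((List.range (i + 1)).map (play init κ ℓ δ q0 σ))) := by
  rw [← playAndHistory_snd]
  rfl

theorem isPlay_play : IsPlay init κ ℓ δ q0 σ (play init κ ℓ δ q0 σ) :=
  ⟨play_zero σ, play_succ σ⟩

theorem play_turn (i : ℕ) : (play init κ ℓ δ q0 σ i).turn = (i : Fin n) := by
  induction i with
  | zero => rfl
  | succ i ih => rw [play_succ, gStep_turn, ih, Nat.cast_succ]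

theorem play_turn_round (k j : ℕ) (hj : j < n) :
    (play init κ ℓ δ q0 σ (k * n + j)).turn = ⟨j, hj⟩ := by
  rw [play_turn]
  ext
  rw [Fin.val_natCast, Nat.mul_add_mod', Nat.mod_eq_of_lt hj]

theorem play_st_frame (k : ℕ) (p : Fin n) {i j : ℕ} (hij : i ≤ j) (hjn : j ≤ n)
    (hp : ∀ e, i ≤ e → e < j → e ≠ p) :
    (play init κ ℓ δ q0 σ (k * n + j)).st p = (play init κ ℓ δ q0 σ (k * n + i)).st p := by
  induction j, hij using Nat.le_induction with
  | base => rfl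
  | succ j hij ih =>
    rw [← add_assoc, play_succ, gStep_st, play_turn_round σ k j (by omega),
      Function.update_of_ne fun h => hp j hij j.lt_succ_self (congrArg Fin.val h).symm,
      ih (by omega) fun e he hej => hp e he (by omega)]

theorem play_aut_frame (k : ℕ) {i j : ℕ} (hi : 1 ≤ i) (hij : i ≤ j) (hjn : j ≤ n) :
    (play init κ ℓ δ q0 σ (k * n + j)).aut = (play init κ ℓ δ q0 σ (k * n + i)).aut := by
  induction j, hij using Nat.le_induction with
  | base => rfl
  | succ j hij ih =>
    have hturn : (play init κ ℓ δ q0 σ (k * n + j)).turn ≠ 0 := by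
      rw [play_turn_round σ k j (by omega)]
      exact Fin.ne_of_val_ne (by simpa using (by omega : j ≠ 0))
    rw [← add_assoc, play_succ, gStep_aut, if_neg hturn, ih (by omega)]

theorem copyPath_succ (p : Fin n) (k : ℕ) :
    copyPath init κ ℓ δ q0 σ p (k + 1) = κ (copyPath init κ ℓ δ q0 σ p k)
      (σ p ((List.range (k * n + p + 1)).map (play init κ ℓ δ q0 σ))) := by
  have hp := p.isLt
  rw [copyPath, copyPath, add_mul, one_mul,
    play_st_frame σ k p (i := p + 1) (by omega) le_rfl fun e he _ => by omega,
    ← add_assoc, play_succ, gStep_st, play_turn_round σ k p hp, Function.update_self,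
    play_st_frame σ k p (i := 0) (j := p) (by omega) (by omega) fun e _ he => by omega,
    add_zero]

theorem isKPath_copyPath (p : Fin n) : IsKPath init κ (copyPath init κ ℓ δ q0 σ p) :=
  ⟨by simp [copyPath, play_zero, gInit], fun k => ⟨_, copyPath_succ σ p k⟩⟩

theorem play_round_aut_succ (k : ℕ) :
    (play init κ ℓ δ q0 σ ((k + 1) * n)).aut =
      δ (play init κ ℓ δ q0 σ (k * n)).aut (letterOf ℓ (play init κ ℓ δ q0 σ (k * n)).st) := by
  have hn := Nat.pos_of_ne_zero (NeZero.ne n)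
  rw [add_mul, one_mul, play_aut_frame σ k le_rfl hn le_rfl, play_succ, gStep_aut,
    ← add_zero (k * n), play_turn_round σ k 0 hn]
  exact if_pos rfl

theorem play_round_aut_eq_dpaRun (k : ℕ) :
    (play init κ ℓ δ q0 σ (k * n)).aut =
      dpaRun δ q0 (fun k => letterOf ℓ (play init κ ℓ δ q0 σ (k * n)).st) k := by
  induction k with
  | zero => simp [play_zero, gInit, dpaRun]
  | succ k ih => rw [play_round_aut_succ, ih]; rfl

/-- `(i + n - 1) / n * n` is `i` rounded up to a multiple of `n`: the DPA component only
changes at the first move of a round. -/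
theorem play_aut_eq_round_end (i : ℕ) :
    (play init κ ℓ δ q0 σ i).aut = (play init κ ℓ δ q0 σ ((i + n - 1) / n * n)).aut := by
  have hn := Nat.pos_of_ne_zero (NeZero.ne n)
  rcases Nat.eq_zero_or_pos i with rfl | hi
  · rw [Nat.div_eq_of_lt (by omega), zero_mul]
  · obtain ⟨k, j, hj, rfl⟩ : ∃ k j, j < n ∧ i = k * n + (j + 1) :=
      ⟨(i - 1) / n, (i - 1) % n, Nat.mod_lt _ hn, by
        have := Nat.div_add_mod' (i - 1) n; omega⟩
    have hround : (k * n + (j + 1) + n - 1) / n = k + 1 := by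
      rw [show k * n + (j + 1) + n - 1 = n * (k + 1) + j by ring_nf; omega,
        Nat.mul_add_div hn, Nat.div_eq_of_lt hj, add_zero]
    rw [hround, add_mul, one_mul, play_aut_frame σ k (i := j + 1) (by omega) (by omega) le_rfl]

theorem minInfEven_dpaRun_of_evenPlay {c : Q → ℕ} (h : EvenPlay c (play init κ ℓ δ q0 σ)) :
    MinInfEven c (dpaRun δ q0 fun k => letterOf ℓ (play init κ ℓ δ q0 σ (k * n)).st) := by
  have hn := Nat.pos_of_ne_zero (NeZero.ne n)
  have hsurj : Function.Surjective fun i => (i + n - 1) / n := fun k =>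
    ⟨k * n, show (k * n + n - 1) / n = k by rw [show k * n + n - 1 = n * k + (n - 1) by rw [mul_comm]; omega,
      Nat.mul_add_div hn, Nat.div_eq_of_lt (by omega), add_zero]⟩
  have hfib (b : ℕ) : ((fun i => (i + n - 1) / n) ⁻¹' {b}).Finite := by
    refine (Set.finite_Iic (b * n)).subset fun i (hi : (i + n - 1) / n = b) => ?_
    have hdiv : n * b + (i + n - 1) % n = i + n - 1 := hi ▸ Nat.div_add_mod _ _
    have := Nat.mod_lt (i + n - 1) hn
    rw [Set.mem_Iic, mul_comm]
    omega
  have hstutter : (fun i => (play init κ ℓ δ q0 σ i).aut) =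
      (fun k => (play init κ ℓ δ q0 σ (k * n)).aut) ∘ fun i => (i + n - 1) / n :=
    funext (play_aut_eq_round_end σ)
  rw [EvenPlay, hstutter, minInfEven_comp_iff hsurj hfib] at h
  simpa only [play_round_aut_eq_dpaRun] using h

omit [NeZero n] in
theorem listObs_map_range {p : Fin n} {f g : ℕ → GVertex St Q n} {i : ℕ}
    (h : ∀ j ≤ i, gObs p (f j) (g j)) :
    listObs p ((List.range (i + 1)).map f) ((List.range (i + 1)).map g) :=
  ⟨by simp, fun j h₁ _ => by
    simp only [List.length_map, List.length_range] at h₁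
    simpa using h j (by omega)⟩

/-- By induction, every player `q ≤ p` sees indistinguishable histories in the two plays and
hence moves alike. -/
theorem play_gObs_of_eqOn {σ₁ σ₂ : Fin n → List (GVertex St Q n) → D} {p : Fin n}
    (hag : ∀ q ≤ p, σ₁ q = σ₂ q) (hobs : ∀ q ≤ p, ObsStrategy q (σ₁ q)) (i : ℕ) :
    gObs p (play init κ ℓ δ q0 σ₁ i) (play init κ ℓ δ q0 σ₂ i) := by
  induction i using Nat.strong_induction_on with
  | _ i ih =>
    cases i with
    | zero => exact ⟨rfl, fun _ _ => rfl⟩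
    | succ i =>
      rw [play_succ, play_succ]
      refine (ih i i.lt_succ_self).gStep fun hturn => ?_
      rw [play_turn] at hturn ⊢
      rw [play_turn, ← hag _ hturn]
      exact hobs _ hturn _ _ (listObs_map_range fun j hj => (ih j (by omega)).mono hturn)

theorem copyPath_eq_of_eqOn {σ₁ σ₂ : Fin n → List (GVertex St Q n) → D} {p : Fin n}
    (hag : ∀ q ≤ p, σ₁ q = σ₂ q) (hobs : ∀ q ≤ p, ObsStrategy q (σ₁ q)) :
    copyPath init κ ℓ δ q0 σ₁ p = copyPath init κ ℓ δ q0 σ₂ p :=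
  funext fun k => (play_gObs_of_eqOn hag hobs (k * n)).2 p le_rfl

/-- In round `k` the history before `p`'s move has length `k * n + p + 1`, so this plays
`d k`. -/
def followStrategy (p : Fin n) (d : ℕ → D) (h : List (GVertex St Q n)) : D :=
  d ((h.length - 1 - p) / n)

omit [NeZero n] in
theorem obsStrategy_followStrategy (p : Fin n) (d : ℕ → D) :
    ObsStrategy p (followStrategy (St := St) (Q := Q) p d) :=
  fun _ _ h => by rw [followStrategy, followStrategy, h.1]

theorem copyPath_eq_of_followStrategy {p : Fin n} {d : ℕ → D}
    (hσ : σ p = followStrategy p d) {τ : ℕ → St} (h0 : τ 0 = init)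
    (hstep : ∀ k, τ (k + 1) = κ (τ k) (d k)) : copyPath init κ ℓ δ q0 σ p = τ := by
  have hn := Nat.pos_of_ne_zero (NeZero.ne n)
  funext k
  induction k with
  | zero => simp [copyPath, play_zero, gInit, h0]
  | succ k ih =>
    rw [copyPath_succ, hσ, ih, hstep, followStrategy, List.length_map, List.length_range,
      show k * n + p + 1 - 1 - p = k * n by omega, Nat.mul_div_cancel k hn]

variable (init κ ℓ δ q0)

/-- The invariant of the induction along the quantifier prefix: the traces chosen so far are
those of the first copies under a profile that agrees with `σ` on `coal`. -/
def RealizablePrefix (coal : Set (Fin n)) (pre : List (ℕ → Set α)) : Prop :=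
  ∃ σ' : Fin n → List (GVertex St Q n) → D, (∀ p ∈ coal, σ' p = σ p) ∧
    (∀ q : Fin n, q.val < pre.length → ObsStrategy q (σ' q)) ∧
    ∀ (j : Fin n) (hj : j.val < pre.length), pre[j.val] = ℓ ∘ copyPath init κ ℓ δ q0 σ' j

variable {init κ ℓ δ q0}

omit [NeZero n] in
theorem getElem_append_singleton_eq {β : Type} {pre : List β} {t : β} {f : Fin n → β}
    (hpre : ∀ (j : Fin n) (hj : j.val < pre.length), pre[j.val] = f j)
    (hlen : pre.length < n) (ht : t = f ⟨pre.length, hlen⟩)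
    (j : Fin n) (hj : j.val < (pre ++ [t]).length) : (pre ++ [t])[j.val] = f j := by
  rw [List.length_append, List.length_singleton] at hj
  rcases Nat.lt_succ_iff_lt_or_eq.mp hj with hj | hj
  · rw [List.getElem_append_left hj, hpre j hj]
  · rw [List.getElem_concat_length hj, ht]
    exact congrArg f (Fin.ext hj.symm)

theorem RealizablePrefix.append_of_notMem {coal : Set (Fin n)} {pre : List (ℕ → Set α)}
    (hpre : RealizablePrefix init κ ℓ δ q0 σ coal pre) (hlen : pre.length < n)
    (hm : ⟨pre.length, hlen⟩ ∉ coal) {t : ℕ → Set α} (ht : t ∈ KTraces init κ ℓ) :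
    RealizablePrefix init κ ℓ δ q0 σ coal (pre ++ [t]) := by
  obtain ⟨σ', hag, hobs, htr⟩ := hpre
  obtain ⟨τ, ⟨hτ0, hτstep⟩, hτ⟩ := ht
  choose d hd using hτstep
  set m : Fin n := ⟨pre.length, hlen⟩
  have hobs' : ∀ q : Fin n, q.val < (pre ++ [t]).length →
      ObsStrategy q (Function.update σ' m (followStrategy m d) q) := by
    intro q hq
    rcases eq_or_ne q m with rfl | hqm
    · rw [Function.update_self]
      exact obsStrategy_followStrategy _ d
    · rw [Function.update_of_ne hqm]
      have hqm' : q.val ≠ pre.length := fun h => hqm (Fin.ext h)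
      exact hobs q (by simp only [List.length_append, List.length_singleton] at hq; omega)
  refine ⟨Function.update σ' m (followStrategy m d),
    fun p hp => by rw [Function.update_of_ne (ne_of_mem_of_not_mem hp hm), hag p hp], hobs',
    getElem_append_singleton_eq (fun j hj => ?_) hlen ?_⟩
  · have hlt : ∀ q ≤ j, q.val < pre.length := fun q hq => lt_of_le_of_lt hq hj
    rw [htr j hj, copyPath_eq_of_eqOn
      (fun q hq => Function.update_of_ne (fun h => (hlt q hq).ne (congrArg Fin.val h)) _ _)
      fun q hq => hobs' q (by simpa using Nat.lt_succ_of_lt (hlt q hq))]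
  · rw [copyPath_eq_of_followStrategy _ (Function.update_self _ _ _) hτ0 hd]
    exact funext hτ

theorem RealizablePrefix.exists_append_of_mem {coal : Set (Fin n)} {pre : List (ℕ → Set α)}
    (hpre : RealizablePrefix init κ ℓ δ q0 σ coal pre) (hlen : pre.length < n)
    (hm : ⟨pre.length, hlen⟩ ∈ coal) (hσ : ∀ p ∈ coal, ObsStrategy p (σ p)) :
    ∃ t ∈ KTraces init κ ℓ, RealizablePrefix init κ ℓ δ q0 σ coal (pre ++ [t]) := by
  obtain ⟨σ', hag, hobs, htr⟩ := hpre
  refine ⟨ℓ ∘ copyPath init κ ℓ δ q0 σ' ⟨pre.length, hlen⟩,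
    ⟨_, isKPath_copyPath σ' _, fun _ => rfl⟩, σ', hag, fun q hq => ?_,
    getElem_append_singleton_eq htr hlen rfl⟩
  rcases (Nat.lt_succ_iff_lt_or_eq.mp (by simpa using hq)) with hq | hq
  · exact hobs q hq
  · rw [show q = ⟨pre.length, hlen⟩ from Fin.ext hq, hag _ hm]
    exact hσ _ hm

theorem RealizablePrefix.zipTraces_eq {coal : Set (Fin n)} {pre : List (ℕ → Set α)}
    (hpre : RealizablePrefix init κ ℓ δ q0 σ coal pre) (hlen : pre.length = n) :
    ∃ σ' : Fin n → List (GVertex St Q n) → D, (∀ p ∈ coal, σ' p = σ p) ∧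
      zipTraces n pre = fun k => letterOf ℓ (play init κ ℓ δ q0 σ' (k * n)).st := by
  obtain ⟨σ', hag, -, htr⟩ := hpre
  refine ⟨σ', hag, funext fun k => Set.ext fun x => ?_⟩
  have hx : x.2.val < pre.length := hlen ▸ x.2.isLt
  change x.1 ∈ pre.getD x.2.val (fun _ => ∅) k ↔ x.1 ∈ ℓ (copyPath init κ ℓ δ q0 σ' x.2 k)
  rw [List.getD_eq_getElem _ _ hx, htr x.2 hx]
  rfl

end Game

/-- Soundness of the multiplayer partial-information game:
let `φ = Q₁π₁…Q_nπ_n.ψ` (quantifiers given by `Qv`, `true` = `∃`) and let the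
DPA `(δ, q0, c)` recognize the LTL body `ψ` over indexed atomic propositions.
If the coalition `P_∃ = {p | Qv p = true}` of players controlling the
existentially quantified copies wins `G_{K,φ}`, then `K ⊨ φ`. -/
theorem game_soundness {St D α Q : Type} {n : ℕ} [NeZero n]
    (init : St) (κ : St → D → St) (ℓ : St → Set α)
    (q0 : Q) (δ : Q → Set (α × Fin n) → Q) (c : Q → ℕ)
    (ψ : LTL (α × Fin n))
    (hrec : ∀ u : ℕ → Set (α × Fin n),
      MinInfEven c (dpaRun δ q0 u) ↔ LTL.sat u 0 ψ)
    (Qv : Fin n → Bool)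
    (hwin : Wins init κ ℓ δ q0 c {p | Qv p = true}) :
    hyperSat (KTraces init κ ℓ) (List.ofFn Qv)
      (fun ts => LTL.sat (zipTraces n ts) 0 ψ) := by
  obtain ⟨σ, hσobs, hσwin⟩ := hwin
  refine hyperSat_of_invariant _ (RealizablePrefix init κ ℓ δ q0 σ {p | Qv p = true}) _
    (fun pre h hq hpre => ?_) (fun pre h hq hpre => ?_) (fun pre hlen hpre => ?_)
    ⟨σ, fun _ _ => rfl, fun _ h => absurd h (Nat.not_lt_zero _),
      fun _ h => absurd h (Nat.not_lt_zero _)⟩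
  · rw [List.getElem_ofFn] at hq
    exact fun t ht => hpre.append_of_notMem σ (by simpa using h) (by simpa using hq) ht
  · rw [List.getElem_ofFn] at hq
    exact hpre.exists_append_of_mem σ (by simpa using h) hq hσobs
  · obtain ⟨σ', hag, hzip⟩ := hpre.zipTraces_eq σ (by simpa using hlen)
    rw [hzip, ← hrec]
    exact minInfEven_dpaRun_of_evenPlay σ' (hσwin σ' hag _ (isPlay_play σ'))
end

section
/- Every trace of the prophecy-extended Kripke structure K^P projects (by removing prophecy variables) to a trace of K, and conversely every trace t of K together with any sequence A : ℕ → Set P of prophecy-variable valuations with A(0) agreeing with the initial label lifts to a trace of K^P whose projection is t. -/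
/-- Transition function of the prophecy-extended structure `K^P`: states are
pairs of a state of `K` and a valuation of the prophecy variables; a direction
`(d, A)` moves the `K`-component along `d` and sets the prophecy valuation of
the successor to `A` (the valuation stored at the source is irrelevant, as for
the dedicated initial state). -/
def kPStep {St D P : Type} (κ : St → D → St) :
    St × Set P → D × Set P → St × Set P :=
  fun sA dA => (κ sA.1 dA.1, dA.2)

/-- Labeling of `K^P` over `AP ⊎ P`: the original label of the `K`-component
together with the currently true prophecy variables. -/
def kPLabel {St α P : Type} (ℓ : St → Set α) : St × Set P → Set (α ⊕ P) :=
  fun sA => Sum.inl '' ℓ sA.1 ∪ Sum.inr '' sA.2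

/-- Projection of a trace over `AP ⊎ P` to a trace over `AP`. -/
def projTrace {α P : Type} (t : ℕ → Set (α ⊕ P)) : ℕ → Set α :=
  fun i => {a | Sum.inl a ∈ t i}

/-- every trace of `K^P` projects to a trace of `K`; conversely,
every trace `t` of `K` together with any sequence `A : ℕ → Set P` of
prophecy-variable valuations agreeing with the initial label (`A 0 = ∅`, as
the initial state carries no prophecy variables) lifts to a trace of `K^P`
whose projection is `t` and whose prophecy part is exactly `A`. -/
theorem kP_traces {St D α P : Type} (init : St) (κ : St → D → St)
    (ℓ : St → Set α) :
    (∀ t' ∈ KTraces ((init, (∅ : Set P))) (kPStep κ) (kPLabel ℓ),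
        projTrace t' ∈ KTraces init κ ℓ) ∧
    (∀ t ∈ KTraces init κ ℓ, ∀ A : ℕ → Set P, A 0 = ∅ →
        ∃ t' ∈ KTraces ((init, (∅ : Set P))) (kPStep κ) (kPLabel ℓ),
          projTrace t' = t ∧ ∀ i, {p : P | Sum.inr p ∈ t' i} = A i) := by
  have hproj : ∀ (s : St) (B : Set P), {a | Sum.inl a ∈ kPLabel (P := P) ℓ (s, B)} = ℓ s := by
    intro s B
    ext a
    simp [kPLabel]
  have hinr : ∀ (s : St) (B : Set P), {p : P | Sum.inr p ∈ kPLabel (P := P) ℓ (s, B)} = B := by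
    intro s B
    ext p
    simp [kPLabel]
  constructor
  · rintro t' ⟨τ', ⟨h0, hstep⟩, ht⟩
    refine ⟨fun i => (τ' i).1, ⟨by simp [h0], ?_⟩, ?_⟩
    · intro i
      obtain ⟨⟨d, B⟩, hd⟩ := hstep i
      exact ⟨d, by simp only []; rw [hd]; rfl⟩
    · intro i
      have := hproj (τ' i).1 (τ' i).2
      simp only [projTrace, ht i]
      rw [← this]
  · rintro t ⟨τ, ⟨h0, hstep⟩, ht⟩ A hA0
    refine ⟨fun i => kPLabel ℓ (τ i, A i), ⟨fun i => (τ i, A i), ⟨?_, ?_⟩, fun i => rfl⟩, ?_, ?_⟩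
    · show (τ 0, A 0) = (init, ∅)
      rw [h0, hA0]
    · intro i
      obtain ⟨d, hd⟩ := hstep i
      exact ⟨(d, A (i + 1)), by show (τ (i+1), A (i+1)) = _; simp [kPStep, hd]⟩
    · funext i
      simp only [projTrace, hproj, ht]
    · intro i
      exact hinr (τ i) (A i)
end

section
/- Soundness of prophecy introduction for ∀∃ (n = 1): K ⊨ ∀π₁.∃π₂.ψ if and only if K^P ⊨ ∀π₁.∃π₂.((X G ⋀_{ξ∈Ξ₁} ((p^ξ)_{π₁} ↔ ξ)) → ψ), where Ξ₁ is a finite set of LTL prophecy formulas over trace variable π₁, P contains a fresh atomic proposition p^ξ for each ξ ∈ Ξ₁, and K^P is the prophecy-extended structure. -/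
/-- Renaming of atomic propositions in an LTL formula. -/
def LTL.map {α β : Type} (f : α → β) : LTL α → LTL β
  | .tt => .tt
  | .atom a => .atom (f a)
  | .conj φ ψ => .conj (φ.map f) (ψ.map f)
  | .neg φ => .neg (φ.map f)
  | .next φ => .next (φ.map f)
  | .untl φ ψ => .untl (φ.map f) (ψ.map f)

/-- Derived eventually, globally, implication, biimplication, conjunction of
a list. -/
def LTL.ev {α : Type} (ψ : LTL α) : LTL α := .untl .tt ψ
def LTL.glob {α : Type} (ψ : LTL α) : LTL α := .neg (LTL.ev (.neg ψ))
def LTL.imp {α : Type} (φ ψ : LTL α) : LTL α := .neg (.conj φ (.neg ψ))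
def LTL.biimp {α : Type} (φ ψ : LTL α) : LTL α := .conj (φ.imp ψ) (ψ.imp φ)
def LTL.conjList {α : Type} (l : List (LTL α)) : LTL α := l.foldr .conj .tt

/-- All atomic propositions occurring in the formula satisfy `P`. -/
def LTL.OnlyOn {α : Type} (P : α → Prop) : LTL α → Prop
  | .tt => True
  | .atom a => P a
  | .conj φ ψ => φ.OnlyOn P ∧ ψ.OnlyOn P
  | .neg φ => φ.OnlyOn P
  | .next φ => φ.OnlyOn P
  | .untl φ ψ => φ.OnlyOn P ∧ ψ.OnlyOn P

/-- Embedding of `{π₁,π₂}`-indexed original atomic propositions into the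
prophecy-extended alphabet. -/
def embed2 {α : Type} (m : ℕ) : α × Fin 2 → (α ⊕ Fin m) × Fin 2 :=
  fun x => (Sum.inl x.1, x.2)

/-- The premise `X G ⋀_{ξ ∈ Ξ₁} ((p^ξ)_{π₁} ↔ ξ)`: from the next step on,
each prophecy variable `p^ξ` (read on trace `π₁`) holds iff the prophecy
formula `ξ` holds. -/
def prophPremise2 {α : Type} (Ξ : List (LTL (α × Fin 2))) :
    LTL ((α ⊕ Fin Ξ.length) × Fin 2) :=
  .next (LTL.glob (LTL.conjList ((List.finRange Ξ.length).map fun k =>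
    LTL.biimp (.atom (Sum.inr k, (0 : Fin 2))) ((Ξ.get k).map (embed2 Ξ.length)))))

/-!
If `K ⊨ ∀π₁.∃π₂.ψ`, a trace of `K^P` projects to a trace of `K`, and the `ψ`-witness of the
projection, extended by empty prophecies, is a witness in `K^P`: `ψ` only reads original
propositions. Conversely, extend a trace `t₁` of `K` by the prophecy valuation that sets `p^ξ` at
step `j ≥ 1` exactly when `ξ` holds on `t₁` from `j`. Since `ξ` only reads `π₁`, this makes the
premise true whatever trace is chosen for `π₂`, so the `K^P`-witness satisfies `ψ`, and so does
its projection to `K`.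
-/

namespace LTL

variable {α β : Type}

theorem sat_map (f : α → β) (φ : LTL α) (t : ℕ → Set β) (i : ℕ) :
    (φ.map f).sat t i ↔ φ.sat (fun j => f ⁻¹' t j) i := by
  induction φ generalizing i <;> simp_all [LTL.map, LTL.sat]

theorem sat_congr_of_onlyOn {P : α → Prop} {φ : LTL α} (hφ : φ.OnlyOn P)
    {t t' : ℕ → Set α} (h : ∀ j a, P a → (a ∈ t j ↔ a ∈ t' j)) (i : ℕ) :
    φ.sat t i ↔ φ.sat t' i := by
  induction φ generalizing i with
  | tt => rfl
  | atom a => exact h i a hφ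
  | conj φ ψ ihφ ihψ => exact and_congr (ihφ hφ.1 i) (ihψ hφ.2 i)
  | neg φ ih => exact not_congr (ih hφ i)
  | next φ ih => exact ih hφ (i + 1)
  | untl φ ψ ihφ ihψ =>
      simp only [LTL.sat, ihφ hφ.1, ihψ hφ.2]

theorem sat_glob (φ : LTL α) (t : ℕ → Set α) (i : ℕ) :
    φ.glob.sat t i ↔ ∀ k, i ≤ k → φ.sat t k := by
  simp [LTL.glob, LTL.ev, LTL.sat]

theorem sat_imp (φ ψ : LTL α) (t : ℕ → Set α) (i : ℕ) :
    (φ.imp ψ).sat t i ↔ (φ.sat t i → ψ.sat t i) := by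
  simp only [LTL.imp, LTL.sat]
  tauto

theorem sat_biimp (φ ψ : LTL α) (t : ℕ → Set α) (i : ℕ) :
    (φ.biimp ψ).sat t i ↔ (φ.sat t i ↔ ψ.sat t i) := by
  simp only [LTL.biimp, LTL.sat, sat_imp]
  tauto

theorem sat_conjList (l : List (LTL α)) (t : ℕ → Set α) (i : ℕ) :
    (conjList l).sat t i ↔ ∀ φ ∈ l, φ.sat t i := by
  induction l with
  | nil => simp [conjList, LTL.sat]
  | cons φ l ih => simp_all [conjList, LTL.sat]

end LTL

section Traces

variable {α P : Type}

theorem mem_zipTraces_two_zero (t₁ t₂ : ℕ → Set α) (a : α) (k : ℕ) :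
    (a, (0 : Fin 2)) ∈ zipTraces 2 [t₁, t₂] k ↔ a ∈ t₁ k := by
  simp [zipTraces]

theorem LTL.sat_zipTraces_two_congr_snd {φ : LTL (α × Fin 2)}
    (hφ : φ.OnlyOn (fun x => x.2 = (0 : Fin 2))) (t₁ t₂ t₂' : ℕ → Set α) (i : ℕ) :
    φ.sat (zipTraces 2 [t₁, t₂]) i ↔ φ.sat (zipTraces 2 [t₁, t₂']) i :=
  sat_congr_of_onlyOn hφ (by rintro j ⟨a, _⟩ rfl; simp only [mem_zipTraces_two_zero]) i

theorem LTL.sat_map_embed2 {m : ℕ} (φ : LTL (α × Fin 2)) (t₁ t₂ : ℕ → Set (α ⊕ Fin m))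
    (i : ℕ) :
    (φ.map (embed2 m)).sat (zipTraces 2 [t₁, t₂]) i ↔
      φ.sat (zipTraces 2 [projTrace t₁, projTrace t₂]) i := by
  rw [sat_map]
  congr! with j
  ext ⟨a, k⟩
  fin_cases k <;> simp [zipTraces, embed2, projTrace]

def prophExtend (t : ℕ → Set α) (A : ℕ → Set P) : ℕ → Set (α ⊕ P) :=
  fun i => Sum.inl '' t i ∪ Sum.inr '' A i

theorem projTrace_prophExtend (t : ℕ → Set α) (A : ℕ → Set P) :
    projTrace (prophExtend t A) = t := by
  funext i
  ext a
  simp [projTrace, prophExtend]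

theorem inr_mem_prophExtend (t : ℕ → Set α) (A : ℕ → Set P) (p : P) (i : ℕ) :
    Sum.inr p ∈ prophExtend t A i ↔ p ∈ A i := by
  simp [prophExtend]

variable {St D : Type} {init : St} {κ : St → D → St} {ℓ : St → Set α}

theorem prophExtend_mem_kTraces {t : ℕ → Set α} (ht : t ∈ KTraces init κ ℓ)
    {A : ℕ → Set P} (hA : A 0 = ∅) :
    prophExtend t A ∈ KTraces (init, ∅) (kPStep κ) (kPLabel ℓ) := by
  obtain ⟨τ, ⟨hτ₀, hτ⟩, hℓ⟩ := ht
  obtain rfl : t = fun i => ℓ (τ i) := funext hℓ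
  refine ⟨fun i => (τ i, A i), ⟨by simp [hτ₀, hA], fun i => ?_⟩, fun i => rfl⟩
  obtain ⟨d, hd⟩ := hτ i
  exact ⟨(d, A (i + 1)), by simp [kPStep, hd]⟩

theorem projTrace_mem_kTraces {t : ℕ → Set (α ⊕ P)}
    (ht : t ∈ KTraces (init, ∅) (kPStep κ) (kPLabel ℓ)) :
    projTrace t ∈ KTraces init κ ℓ := by
  obtain ⟨τ, ⟨hτ₀, hτ⟩, hℓ⟩ := ht
  obtain rfl : t = fun i => kPLabel ℓ (τ i) := funext hℓ
  refine ⟨fun i => (τ i).1, ⟨by simp [hτ₀], fun i => ?_⟩, fun i => ?_⟩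
  · obtain ⟨d, hd⟩ := hτ i
    exact ⟨d.1, by simp [hd, kPStep]⟩
  · ext a
    simp [projTrace, kPLabel]

end Traces

theorem sat_prophPremise2_iff {α : Type} (Ξ : List (LTL (α × Fin 2)))
    (t₁ t₂ : ℕ → Set (α ⊕ Fin Ξ.length)) :
    (prophPremise2 Ξ).sat (zipTraces 2 [t₁, t₂]) 0 ↔
      ∀ i, 1 ≤ i → ∀ k, (Sum.inr k ∈ t₁ i ↔
        (Ξ.get k).sat (zipTraces 2 [projTrace t₁, projTrace t₂]) i) := by
  simp only [prophPremise2, LTL.sat, LTL.sat_glob, LTL.sat_conjList, List.mem_map,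
    List.mem_finRange, true_and, forall_exists_index, forall_apply_eq_imp_iff, LTL.sat_biimp,
    LTL.sat_map_embed2, mem_zipTraces_two_zero, zero_add]

/-- prophecy soundness for `∀π₁.∃π₂.ψ`: for a finite set `Ξ₁`
of LTL prophecy formulas mentioning only `π₁` and fresh prophecy variables
`p^ξ` (one per `ξ ∈ Ξ₁`), we have `K ⊨ ∀π₁.∃π₂.ψ` iff
`K^P ⊨ ∀π₁.∃π₂.((X G ⋀_{ξ∈Ξ₁} ((p^ξ)_{π₁} ↔ ξ)) → ψ)`. -/
theorem prophecy_soundness_forall_exists {St D α : Type} (init : St)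
    (κ : St → D → St) (ℓ : St → Set α) (ψ : LTL (α × Fin 2))
    (Ξ : List (LTL (α × Fin 2)))
    (hΞ : ∀ ξ ∈ Ξ, LTL.OnlyOn (fun x => x.2 = (0 : Fin 2)) ξ) :
    (∀ t₁ ∈ KTraces init κ ℓ, ∃ t₂ ∈ KTraces init κ ℓ,
        LTL.sat (zipTraces 2 [t₁, t₂]) 0 ψ) ↔
    (∀ t₁ ∈ KTraces ((init, (∅ : Set (Fin Ξ.length)))) (kPStep κ) (kPLabel ℓ),
      ∃ t₂ ∈ KTraces ((init, (∅ : Set (Fin Ξ.length)))) (kPStep κ) (kPLabel ℓ),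
        LTL.sat (zipTraces 2 [t₁, t₂]) 0
          (LTL.imp (prophPremise2 Ξ) (ψ.map (embed2 Ξ.length)))) := by
  constructor
  · intro h t₁ ht₁
    obtain ⟨t₂, ht₂, hψ⟩ := h _ (projTrace_mem_kTraces ht₁)
    refine ⟨prophExtend t₂ fun _ => ∅, prophExtend_mem_kTraces ht₂ rfl, ?_⟩
    rw [LTL.sat_imp, LTL.sat_map_embed2, projTrace_prophExtend]
    exact fun _ => hψ
  · intro h t₁ ht₁
    let prophecies : ℕ → Set (Fin Ξ.length) := fun i =>
      if i = 0 then ∅ else {k | (Ξ.get k).sat (zipTraces 2 [t₁, t₁]) i}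
    obtain ⟨t₂, ht₂, himp⟩ :=
      h (prophExtend t₁ prophecies) (prophExtend_mem_kTraces ht₁ (if_pos rfl))
    refine ⟨projTrace t₂, projTrace_mem_kTraces ht₂, ?_⟩
    rw [LTL.sat_imp, LTL.sat_map_embed2, projTrace_prophExtend] at himp
    refine himp ((sat_prophPremise2_iff Ξ _ t₂).2 fun i hi k => ?_)
    rw [inr_mem_prophExtend, projTrace_prophExtend,
      LTL.sat_zipTraces_two_congr_snd (hΞ _ (List.get_mem Ξ k)) _ _ t₁]
    simp [prophecies, Nat.one_le_iff_ne_zero.mp hi]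
end
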